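/- Suppose on an interval [t0, t1] that e1, e2, M : [t0, t1] → ℝ are differentiable, c_m ≤ M(t) ≤ c_M, V(t) = M′(t)/2, |χ(t)| ≤ c1 + c2‖z(t)‖ + c3‖z(t)‖², and the uncontrolled error dynamics hold: e1′ = e2 − α e1 and M e2′ = χ − V e2, with α > 0. Define a1 ≜ c3/λ1^{3/2}, a2 ≜ (c2 + 1/2)/λ1, a3 ≜ √(4 a1 c1/√λ1 − a2²), and assume 4 a1 c1/√λ1 > a2². If the reverse dwell-time condition holds: (a3/4)(t1 − t0) + arctan((2 a1/a3)·√λ2·‖z(t0)‖ + a2/a3) < π/2, then for all t ∈ [t0, t1]: ‖z(t)‖ ≤ (1/(2 a1 √λ1))·{a3·tan[(a3/4)(t − t0) + arctan((2 a1/a3)·√λ2·‖z(t0)‖ + a2/a3)] − a2}. -/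

import Mathlib

/-!
The energy `W = (e1² + M e2²)/2` lies between `λ₁‖z‖²` and `λ₂‖z‖²`, and along the dynamics
`W' = e1 e2 - α e1² + χ e2 ≤ c₁‖z‖ + (c₂ + 1/2)‖z‖² + c₃‖z‖³`. Bounding `‖z‖` by `√(W/λ₁)`, the
function `y = √W` satisfies the Riccati inequality `y' ≤ (a₁ y² + a₂ y + c₁/√λ₁)/2`, whose
solution through `√λ₂ ‖z(t₀)‖` is `(a₃ tan(a₃ (t - t₀)/4 + θ) - a₂)/(2 a₁)`; the reverse dwell-time
condition keeps the argument of `tan` below `π/2` on `[t₀, t₁]`. The comparison is made between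
`W` and the square of the solution, which avoids differentiating `√W` where `W` vanishes.
-/

open Set Real Filter Topology

/-- The Euclidean norm of the error vector `z = (e1, e2)`. -/
noncomputable def zNorm (e1 e2 : ℝ → ℝ) (t : ℝ) : ℝ :=
  Real.sqrt ((e1 t) ^ 2 + (e2 t) ^ 2)

theorem le_sq_of_hasDerivAt_of_lt {W D G G' q : ℝ → ℝ} {a b : ℝ}
    (hW : ∀ x ∈ Icc a b, HasDerivAt W (D x) x) (hG : ∀ x ∈ Icc a b, HasDerivAt G (G' x) x)
    (hG_pos : ∀ x ∈ Ico a b, 0 < G x) (hGq : ∀ x ∈ Ico a b, q (G x) < G' x)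
    (hD : ∀ x ∈ Ico a b, ∀ y, 0 < y → W x = y ^ 2 → D x ≤ 2 * y * q y)
    (ha : W a ≤ G a ^ 2) : ∀ x ∈ Icc a b, W x ≤ G x ^ 2 := by
  refine image_le_of_deriv_right_lt_deriv_boundary' (B' := fun x => 2 * G x * G' x)
    (fun x hx => (hW x hx).continuousAt.continuousWithinAt)
    (fun x hx => (hW x (Ico_subset_Icc_self hx)).hasDerivWithinAt) ha
    (fun x hx => ((hG x hx).pow 2).continuousAt.continuousWithinAt)
    (fun x hx => ?_) (fun x hx hWG => ?_)
  · refine ((hG x (Ico_subset_Icc_self hx)).pow 2).hasDerivWithinAt.congr_deriv ?_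
    push_cast
    ring
  · calc D x ≤ 2 * G x * q (G x) := hD x hx _ (hG_pos x hx) hWG
      _ < 2 * G x * G' x := by have := hG_pos x hx; gcongr; exact hGq x hx

/-- For `s ^ 2 = 4 * a₁ * b - a₂ ^ 2` this solves the Riccati equation
`g' = (a₁ * g ^ 2 + a₂ * g + b) / 2`, with `tan θ = (2 * a₁ * g 0 + a₂) / s`. -/
noncomputable def riccatiSol (a₁ a₂ s θ τ : ℝ) : ℝ :=
  (s * tan (s / 4 * τ + θ) - a₂) / (2 * a₁)

section Riccati

variable {a₁ a₂ b s θ τ : ℝ}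

theorem hasDerivAt_riccatiSol (ha₁ : a₁ ≠ 0) (hs : s ^ 2 = 4 * a₁ * b - a₂ ^ 2)
    (hcos : cos (s / 4 * τ + θ) ≠ 0) :
    HasDerivAt (riccatiSol a₁ a₂ s θ)
      ((a₁ * riccatiSol a₁ a₂ s θ τ ^ 2 + a₂ * riccatiSol a₁ a₂ s θ τ + b) / 2) τ := by
  have hlin : HasDerivAt (fun τ => s / 4 * τ + θ) (s / 4) τ := by
    simpa using ((hasDerivAt_id τ).const_mul (s / 4)).add_const θ
  refine ((((hasDerivAt_tan hcos).comp τ hlin).const_mul s).sub_const a₂).div_const (2 * a₁)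
    |>.congr_deriv ?_
  rw [riccatiSol, one_div, ← inv_one_add_tan_sq hcos, inv_inv]
  field_simp
  linear_combination 4 * hs

theorem riccatiSol_arctan_zero (ha₁ : a₁ ≠ 0) (hs : s ≠ 0) (w : ℝ) :
    riccatiSol a₁ a₂ s (arctan ((2 * a₁ * w + a₂) / s)) 0 = w := by
  rw [riccatiSol, mul_zero, zero_add, tan_arctan]
  field_simp
  ring

theorem riccatiSol_lt_riccatiSol {τ₁ τ₂ : ℝ} (ha₁ : 0 < a₁) (hs : 0 < s)
    (h₁ : -(π / 2) < s / 4 * τ₁ + θ) (h₂ : s / 4 * τ₂ + θ < π / 2) (hτ : τ₁ < τ₂) :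
    riccatiSol a₁ a₂ s θ τ₁ < riccatiSol a₁ a₂ s θ τ₂ := by
  unfold riccatiSol
  gcongr
  exact tan_lt_tan_of_lt_of_lt_pi_div_two h₁ h₂ (by gcongr)

end Riccati

section Comparison

variable {W D : ℝ → ℝ} {a₁ a₂ b s w t₀ t₁ : ℝ}

/-- Run at speed `1 + ε` and `ε` ahead, the Riccati solution starts strictly above `w` and
outgrows the bound on `√W`, so its square is a strict barrier for `W`. -/
theorem le_riccatiSol_rescaled {ε : ℝ} (ha₁ : 0 < a₁) (hs : 0 < s)
    (hs2 : s ^ 2 = 4 * a₁ * b - a₂ ^ 2) (hw : 0 ≤ w) (hε : 0 < ε)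
    (hW : ∀ x ∈ Icc t₀ t₁, HasDerivAt W (D x) x)
    (hD : ∀ x ∈ Icc t₀ t₁, ∀ y, 0 < y → W x = y ^ 2 → D x ≤ y * (a₁ * y ^ 2 + a₂ * y + b))
    (hW₀ : W t₀ ≤ w ^ 2)
    (hdwell : s / 4 * ((1 + ε) * (t₁ - t₀) + ε) + arctan ((2 * a₁ * w + a₂) / s) < π / 2) :
    ∀ t ∈ Icc t₀ t₁, ∀ y, 0 ≤ y → y ^ 2 ≤ W t →
      y ≤ riccatiSol a₁ a₂ s (arctan ((2 * a₁ * w + a₂) / s)) ((1 + ε) * (t - t₀) + ε) := by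
  set θ := arctan ((2 * a₁ * w + a₂) / s)
  set g := riccatiSol a₁ a₂ s θ
  set φ : ℝ → ℝ := fun x => (1 + ε) * (x - t₀) + ε
  set q : ℝ → ℝ := fun y => (a₁ * y ^ 2 + a₂ * y + b) / 2
  have hφ_pos : ∀ x ∈ Icc t₀ t₁, 0 < φ x := fun x hx => by
    have : 0 ≤ (1 + ε) * (x - t₀) := mul_nonneg (by linarith) (by linarith [hx.1])
    simp only [φ]; linarith
  have harg : ∀ x ∈ Icc t₀ t₁, -(π / 2) < s / 4 * φ x + θ ∧ s / 4 * φ x + θ < π / 2 :=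
    fun x hx => by
      have : s / 4 * φ x ≤ s / 4 * ((1 + ε) * (t₁ - t₀) + ε) := by
        simp only [φ]; gcongr; exact hx.2
      constructor <;> nlinarith [neg_pi_div_two_lt_arctan ((2 * a₁ * w + a₂) / s), hφ_pos x hx]
  have hG_gt : ∀ x ∈ Icc t₀ t₁, w < g (φ x) := fun x hx => by
    have h := riccatiSol_lt_riccatiSol (a₂ := a₂) (τ₁ := 0) ha₁ hs
      (by rw [mul_zero, zero_add]; exact neg_pi_div_two_lt_arctan _) (harg x hx).2 (hφ_pos x hx)
    rwa [riccatiSol_arctan_zero ha₁.ne' hs.ne'] at h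
  have hG : ∀ x ∈ Icc t₀ t₁, HasDerivAt (fun x => g (φ x)) ((1 + ε) * q (g (φ x))) x :=
    fun x hx => by
      have hφ : HasDerivAt φ (1 + ε) x :=
        ((((hasDerivAt_id x).sub_const t₀).const_mul (1 + ε)).add_const ε).congr_deriv (mul_one _)
      have hcos := (cos_pos_of_mem_Ioo (harg x hx)).ne'
      rw [mul_comm]
      exact (hasDerivAt_riccatiSol ha₁.ne' hs2 hcos).comp x hφ
  have hq : ∀ y, 0 < q y := fun y => by
    simp only [q]
    nlinarith [sq_nonneg (2 * a₁ * y + a₂), sq_pos_of_pos hs]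
  intro t ht y hy hyW
  have ht₀ : t₀ ∈ Icc t₀ t₁ := ⟨le_rfl, ht.1.trans ht.2⟩
  have hcomp := le_sq_of_hasDerivAt_of_lt hW hG
    (fun x hx => hw.trans_lt (hG_gt x (Ico_subset_Icc_self hx)))
    (fun x _ => lt_mul_of_one_lt_left (hq _) (by linarith))
    (fun x hx y hy hWy => (hD x (Ico_subset_Icc_self hx) y hy hWy).trans_eq (by ring))
    (hW₀.trans (pow_le_pow_left₀ hw (hG_gt t₀ ht₀).le 2)) t ht
  exact (pow_le_pow_iff_left₀ hy (hw.trans (hG_gt t ht).le) two_ne_zero).1 (hyW.trans hcomp)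

theorem le_riccatiSol (ha₁ : 0 < a₁) (hs : 0 < s) (hs2 : s ^ 2 = 4 * a₁ * b - a₂ ^ 2)
    (hw : 0 ≤ w) (hW : ∀ x ∈ Icc t₀ t₁, HasDerivAt W (D x) x)
    (hD : ∀ x ∈ Icc t₀ t₁, ∀ y, 0 < y → W x = y ^ 2 → D x ≤ y * (a₁ * y ^ 2 + a₂ * y + b))
    (hW₀ : W t₀ ≤ w ^ 2)
    (hdwell : s / 4 * (t₁ - t₀) + arctan ((2 * a₁ * w + a₂) / s) < π / 2) :
    ∀ t ∈ Icc t₀ t₁, ∀ y, 0 ≤ y → y ^ 2 ≤ W t →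
      y ≤ riccatiSol a₁ a₂ s (arctan ((2 * a₁ * w + a₂) / s)) (t - t₀) := by
  intro t ht y hy hyW
  set θ := arctan ((2 * a₁ * w + a₂) / s)
  have hφ : Tendsto (fun ε : ℝ => (1 + ε) * (t - t₀) + ε) (𝓝[>] 0) (𝓝 (t - t₀)) := by
    have hc : Continuous fun ε : ℝ => (1 + ε) * (t - t₀) + ε := by fun_prop
    simpa using (hc.tendsto 0).mono_left nhdsWithin_le_nhds
  have hcos : cos (s / 4 * (t - t₀) + θ) ≠ 0 := by
    refine (cos_pos_of_mem_Ioo ⟨?_, ?_⟩).ne'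
    · nlinarith [neg_pi_div_two_lt_arctan ((2 * a₁ * w + a₂) / s), ht.1]
    · nlinarith [ht.2]
  have hlim : Tendsto (fun ε => riccatiSol a₁ a₂ s θ ((1 + ε) * (t - t₀) + ε)) (𝓝[>] 0)
      (𝓝 (riccatiSol a₁ a₂ s θ (t - t₀))) :=
    (hasDerivAt_riccatiSol ha₁.ne' hs2 hcos).continuousAt.tendsto.comp hφ
  have hdwell_ε : ∀ᶠ ε in 𝓝[>] 0, s / 4 * ((1 + ε) * (t₁ - t₀) + ε) + θ < π / 2 := by
    have hc : Continuous fun ε : ℝ => s / 4 * ((1 + ε) * (t₁ - t₀) + ε) + θ := by fun_prop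
    exact nhdsWithin_le_nhds (hc.tendsto 0 |>.eventually_lt_const (by simpa using hdwell))
  refine ge_of_tendsto hlim ?_
  filter_upwards [hdwell_ε, self_mem_nhdsWithin] with ε hε hε_pos
  exact le_riccatiSol_rescaled ha₁ hs hs2 hw hε_pos hW hD hW₀ hε t ht y hy hyW

end Comparison

theorem cubic_le_of_mul_le {k₁ k₂ k₃ μ r y : ℝ} (hk₁ : 0 ≤ k₁) (hk₂ : 0 ≤ k₂) (hk₃ : 0 ≤ k₃)
    (hμ : 0 < μ) (hr : 0 ≤ r) (hy : μ * r ≤ y) :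
    k₁ * r + k₂ * r ^ 2 + k₃ * r ^ 3 ≤ y * (k₃ / μ ^ 3 * y ^ 2 + k₂ / μ ^ 2 * y + k₁ / μ) := by
  have hμr : 0 ≤ μ * r := by positivity
  have key : ∀ n : ℕ, ∀ k, 0 ≤ k → k * r ^ n ≤ k / μ ^ n * y ^ n := fun n k hk => by
    rw [div_mul_eq_mul_div, le_div_iff₀ (by positivity), mul_assoc, ← mul_pow, mul_comm r]
    gcongr
  have h1 := key 1 k₁ hk₁
  have h2 := key 2 k₂ hk₂
  have h3 := key 3 k₃ hk₃
  simp only [pow_one] at h1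
  linear_combination h1 + h2 + h3

theorem rpow_three_div_two_eq_sqrt_pow_three {x : ℝ} (hx : 0 ≤ x) :
    x ^ ((3 : ℝ) / 2) = √x ^ 3 := by
  rw [sqrt_eq_rpow, ← rpow_natCast, ← rpow_mul hx]
  norm_num

noncomputable def energy (e1 e2 M : ℝ → ℝ) (t : ℝ) : ℝ :=
  (e1 t ^ 2 + M t * e2 t ^ 2) / 2

section Energy

variable {e1 e2 M : ℝ → ℝ} {t : ℝ}

theorem zNorm_sq : zNorm e1 e2 t ^ 2 = e1 t ^ 2 + e2 t ^ 2 :=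
  sq_sqrt (by positivity)

theorem zNorm_nonneg : 0 ≤ zNorm e1 e2 t :=
  sqrt_nonneg _

theorem min_mul_zNorm_sq_le_energy {cm : ℝ} (h : cm ≤ M t) :
    min (1 / 2) (cm / 2) * zNorm e1 e2 t ^ 2 ≤ energy e1 e2 M t := by
  have h₁ := min_le_left (1 / 2 : ℝ) (cm / 2)
  have h₂ := min_le_right (1 / 2 : ℝ) (cm / 2)
  rw [zNorm_sq, energy]
  nlinarith [sq_nonneg (e1 t), sq_nonneg (e2 t)]

theorem energy_le_max_mul_zNorm_sq {cM : ℝ} (h : M t ≤ cM) :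
    energy e1 e2 M t ≤ max (1 / 2) (cM / 2) * zNorm e1 e2 t ^ 2 := by
  have h₁ := le_max_left (1 / 2 : ℝ) (cM / 2)
  have h₂ := le_max_right (1 / 2 : ℝ) (cM / 2)
  rw [zNorm_sq, energy]
  nlinarith [sq_nonneg (e1 t), sq_nonneg (e2 t)]

theorem hasDerivAt_energy {α χ e2' M' : ℝ} (he1 : HasDerivAt e1 (e2 t - α * e1 t) t)
    (he2 : HasDerivAt e2 e2' t) (hM : HasDerivAt M M' t)
    (hdyn : M t * e2' = χ - M' / 2 * e2 t) :
    HasDerivAt (energy e1 e2 M) (e1 t * e2 t - α * e1 t ^ 2 + χ * e2 t) t := by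
  refine (((he1.pow 2).add (hM.mul (he2.pow 2))).div_const 2).congr_deriv ?_
  simp only [Pi.pow_apply]
  push_cast
  linear_combination e2 t * hdyn

theorem energy_rate_le {α χ c₁ c₂ c₃ : ℝ} (hα : 0 ≤ α)
    (hχ : |χ| ≤ c₁ + c₂ * zNorm e1 e2 t + c₃ * zNorm e1 e2 t ^ 2) :
    e1 t * e2 t - α * e1 t ^ 2 + χ * e2 t
      ≤ c₁ * zNorm e1 e2 t + (c₂ + 1 / 2) * zNorm e1 e2 t ^ 2 + c₃ * zNorm e1 e2 t ^ 3 := by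
  have he2 : |e2 t| ≤ zNorm e1 e2 t := abs_le_sqrt (by nlinarith [sq_nonneg (e1 t)])
  have hχe2 : χ * e2 t ≤ (c₁ + c₂ * zNorm e1 e2 t + c₃ * zNorm e1 e2 t ^ 2) * zNorm e1 e2 t :=
    calc χ * e2 t ≤ |χ| * |e2 t| := by rw [← abs_mul]; exact le_abs_self _
      _ ≤ _ := mul_le_mul hχ he2 (abs_nonneg _) ((abs_nonneg _).trans hχ)
  have hAMGM : e1 t * e2 t ≤ zNorm e1 e2 t ^ 2 / 2 := by
    rw [zNorm_sq]; nlinarith [sq_nonneg (e1 t - e2 t)]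
  nlinarith [mul_nonneg hα (sq_nonneg (e1 t))]

theorem energy_rate_le_of_energy_eq_sq {α χ c₁ c₂ c₃ μ y : ℝ} (hc₁ : 0 ≤ c₁)
    (hc₂ : 0 ≤ c₂ + 1 / 2) (hc₃ : 0 ≤ c₃) (hα : 0 ≤ α) (hμ : 0 < μ)
    (hχ : |χ| ≤ c₁ + c₂ * zNorm e1 e2 t + c₃ * zNorm e1 e2 t ^ 2)
    (hlow : (μ * zNorm e1 e2 t) ^ 2 ≤ energy e1 e2 M t) (hy : 0 ≤ y)
    (hWy : energy e1 e2 M t = y ^ 2) :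
    e1 t * e2 t - α * e1 t ^ 2 + χ * e2 t
      ≤ y * (c₃ / μ ^ 3 * y ^ 2 + (c₂ + 1 / 2) / μ ^ 2 * y + c₁ / μ) := by
  have hμr : μ * zNorm e1 e2 t ≤ y :=
    (pow_le_pow_iff_left₀ (mul_nonneg hμ.le zNorm_nonneg) hy two_ne_zero).1 (hWy ▸ hlow)
  exact (energy_rate_le hα hχ).trans (cubic_le_of_mul_le hc₁ hc₂ hc₃ hμ zNorm_nonneg hμr)

end Energy

theorem uncontrolled_region_growth_bound_general
    (cm cM c1 c2 c3 α t0 t1 lam1 lam2 a1 a2 a3 : ℝ)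
    (hcm : 0 < cm)
    (hc1 : 0 < c1) (hc2 : 0 < c2) (hc3 : 0 < c3)
    (hα : 0 < α)
    (hlam1 : lam1 = min (1/2) (cm/2)) (hlam2 : lam2 = max (1/2) (cM/2))
    (ha1 : a1 = c3 / lam1 ^ ((3 : ℝ)/2)) (ha2 : a2 = (c2 + 1/2) / lam1)
    (hdisc : a2 ^ 2 < 4 * a1 * c1 / Real.sqrt lam1)
    (ha3 : a3 = Real.sqrt (4 * a1 * c1 / Real.sqrt lam1 - a2 ^ 2))
    (e1 e2 M χ V : ℝ → ℝ)
    (hMb : ∀ t ∈ Set.Icc t0 t1, cm ≤ M t ∧ M t ≤ cM)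
    (hMdiff : ∀ t ∈ Set.Icc t0 t1, DifferentiableAt ℝ M t)
    (hV : ∀ t ∈ Set.Icc t0 t1, V t = deriv M t / 2)
    (hχ : ∀ t ∈ Set.Icc t0 t1,
      |χ t| ≤ c1 + c2 * zNorm e1 e2 t + c3 * (zNorm e1 e2 t) ^ 2)
    (he1 : ∀ t ∈ Set.Icc t0 t1, HasDerivAt e1 (e2 t - α * e1 t) t)
    (he2diff : ∀ t ∈ Set.Icc t0 t1, DifferentiableAt ℝ e2 t)
    (he2 : ∀ t ∈ Set.Icc t0 t1, M t * deriv e2 t = χ t - V t * e2 t)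
    (hrdt : (a3/4) * (t1 - t0)
        + Real.arctan ((2 * a1/a3) * Real.sqrt lam2 * zNorm e1 e2 t0 + a2/a3)
        < Real.pi/2) :
    ∀ t ∈ Set.Icc t0 t1,
      zNorm e1 e2 t ≤ (1/(2 * a1 * Real.sqrt lam1)) *
        (a3 * Real.tan ((a3/4) * (t - t0)
            + Real.arctan ((2 * a1/a3) * Real.sqrt lam2 * zNorm e1 e2 t0 + a2/a3))
          - a2) := by
  have hlam1_pos : 0 < lam1 := hlam1 ▸ lt_min (by norm_num) (by linarith)
  set μ := √lam1
  have hμ : 0 < μ := sqrt_pos.2 hlam1_pos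
  have ha1' : a1 = c3 / μ ^ 3 := by rw [ha1, rpow_three_div_two_eq_sqrt_pow_three hlam1_pos.le]
  have ha1_pos : 0 < a1 := by rw [ha1']; positivity
  have hdisc_pos : 0 < 4 * a1 * c1 / μ - a2 ^ 2 := by linarith
  have ha3_pos : 0 < a3 := ha3 ▸ sqrt_pos.2 hdisc_pos
  have ha3_sq : a3 ^ 2 = 4 * a1 * (c1 / μ) - a2 ^ 2 := by
    rw [ha3, sq_sqrt hdisc_pos.le]; ring
  have hlow : ∀ x ∈ Icc t0 t1, (μ * zNorm e1 e2 x) ^ 2 ≤ energy e1 e2 M x := fun x hx => by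
    rw [mul_pow, sq_sqrt hlam1_pos.le, hlam1]
    exact min_mul_zNorm_sq_le_energy (hMb x hx).1
  have hW : ∀ x ∈ Icc t0 t1,
      HasDerivAt (energy e1 e2 M) (e1 x * e2 x - α * e1 x ^ 2 + χ x * e2 x) x := fun x hx =>
    hasDerivAt_energy (he1 x hx) (he2diff x hx).hasDerivAt (hMdiff x hx).hasDerivAt
      (by rw [he2 x hx, hV x hx])
  have hD : ∀ x ∈ Icc t0 t1, ∀ y, 0 < y → energy e1 e2 M x = y ^ 2 →
      e1 x * e2 x - α * e1 x ^ 2 + χ x * e2 x ≤ y * (a1 * y ^ 2 + a2 * y + c1 / μ) := by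
    intro x hx y hy hWy
    rw [ha1', ha2, ← sq_sqrt hlam1_pos.le]
    exact energy_rate_le_of_energy_eq_sq hc1.le (by linarith) hc3.le hα.le hμ (hχ x hx)
      (hlow x hx) hy.le hWy
  intro t ht
  have hW₀ : energy e1 e2 M t0 ≤ (√lam2 * zNorm e1 e2 t0) ^ 2 := by
    rw [mul_pow, sq_sqrt (hlam2 ▸ (le_max_left _ _).trans' (by norm_num)), hlam2]
    exact energy_le_max_mul_zNorm_sq (hMb t0 ⟨le_rfl, ht.1.trans ht.2⟩).2
  have harg : (2 * a1 / a3) * √lam2 * zNorm e1 e2 t0 + a2 / a3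
      = (2 * a1 * (√lam2 * zNorm e1 e2 t0) + a2) / a3 := by
    field_simp
  have hbound := le_riccatiSol ha1_pos ha3_pos ha3_sq
    (mul_nonneg (sqrt_nonneg _) zNorm_nonneg) hW hD hW₀ (harg ▸ hrdt) t ht _
    (mul_nonneg hμ.le zNorm_nonneg) (hlow t ht)
  calc zNorm e1 e2 t = μ * zNorm e1 e2 t / μ := by field_simp
    _ ≤ riccatiSol a1 a2 a3 (arctan ((2 * a1 * (√lam2 * zNorm e1 e2 t0) + a2) / a3))
          (t - t0) / μ := by gcongr
    _ = _ := by unfold riccatiSol; rw [harg]; field_simp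

/-- Theorem 2 of the paper: growth bound (22) on the tracking error in the
uncontrolled region under the reverse dwell-time condition (26), stated for
classical solutions of the uncontrolled error dynamics. -/
theorem uncontrolled_region_growth_bound
    (cm cM c1 c2 c3 α t0 t1 lam1 lam2 a1 a2 a3 : ℝ)
    (hcm : 0 < cm) (hcmM : cm ≤ cM)
    (hc1 : 0 < c1) (hc2 : 0 < c2) (hc3 : 0 < c3)
    (hα : 0 < α) (ht : t0 ≤ t1)
    (hlam1 : lam1 = min (1/2) (cm/2)) (hlam2 : lam2 = max (1/2) (cM/2))
    (ha1 : a1 = c3 / lam1 ^ ((3 : ℝ)/2)) (ha2 : a2 = (c2 + 1/2) / lam1)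
    (hdisc : a2 ^ 2 < 4 * a1 * c1 / Real.sqrt lam1)
    (ha3 : a3 = Real.sqrt (4 * a1 * c1 / Real.sqrt lam1 - a2 ^ 2))
    (e1 e2 M χ V : ℝ → ℝ)
    (hMb : ∀ t ∈ Set.Icc t0 t1, cm ≤ M t ∧ M t ≤ cM)
    (hMdiff : ∀ t ∈ Set.Icc t0 t1, DifferentiableAt ℝ M t)
    (hV : ∀ t ∈ Set.Icc t0 t1, V t = deriv M t / 2)
    (hχ : ∀ t ∈ Set.Icc t0 t1,
      |χ t| ≤ c1 + c2 * zNorm e1 e2 t + c3 * (zNorm e1 e2 t) ^ 2)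
    (he1 : ∀ t ∈ Set.Icc t0 t1, HasDerivAt e1 (e2 t - α * e1 t) t)
    (he2diff : ∀ t ∈ Set.Icc t0 t1, DifferentiableAt ℝ e2 t)
    (he2 : ∀ t ∈ Set.Icc t0 t1, M t * deriv e2 t = χ t - V t * e2 t)
    (hrdt : (a3/4) * (t1 - t0)
        + Real.arctan ((2 * a1/a3) * Real.sqrt lam2 * zNorm e1 e2 t0 + a2/a3)
        < Real.pi/2) :
    ∀ t ∈ Set.Icc t0 t1,
      zNorm e1 e2 t ≤ (1/(2 * a1 * Real.sqrt lam1)) *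
        (a3 * Real.tan ((a3/4) * (t - t0)
            + Real.arctan ((2 * a1/a3) * Real.sqrt lam2 * zNorm e1 e2 t0 + a2/a3))
          - a2) :=
  uncontrolled_region_growth_bound_general cm cM c1 c2 c3 α t0 t1 lam1 lam2 a1 a2 a3 hcm hc1 hc2 hc3
    hα hlam1 hlam2 ha1 ha2 hdisc ha3 e1 e2 M χ V hMb hMdiff hV hχ he1 he2diff he2 hrdt
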